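/- Let Q be a quadratic form of type (r−1,1) with bilinear form B, and let c₁, c₂ ∈ ℝ^r be linearly independent with Q(c₁) < 0, Q(c₂) < 0, and B(c₁,c₂) < 0. Then the quadratic form Q⁺(ν) := Q(ν) + [B(c₁,c₂)/(4Q(c₁)Q(c₂) − B(c₁,c₂)²)]·B(c₁,ν)·B(c₂,ν) is positive definite. -/

import Mathlib

open Matrix

/-- The quadratic form `Q(x) = ½⟨x, Ax⟩` associated to an integer matrix `A`. -/
noncomputable def Qf {r : ℕ} (A : Matrix (Fin r) (Fin r) ℤ) (x : Fin r → ℝ) : ℝ :=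
  (1/2) * (x ⬝ᵥ (A.map (Int.cast : ℤ → ℝ)).mulVec x)

/-- The bilinear form `B(x,y) = ⟨x, Ay⟩`. -/
noncomputable def Bf {r : ℕ} (A : Matrix (Fin r) (Fin r) ℤ) (x y : Fin r → ℝ) : ℝ :=
  x ⬝ᵥ (A.map (Int.cast : ℤ → ℝ)).mulVec y

variable {r : ℕ} {A : Matrix (Fin r) (Fin r) ℤ}

lemma Bf_symm (hsym : A.IsSymm) (x y : Fin r → ℝ) : Bf A x y = Bf A y x := by
  unfold Bf
  simp only [dotProduct, mulVec, dotProduct, Finset.mul_sum]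
  rw [Finset.sum_comm]
  refine Finset.sum_congr rfl fun i _ => Finset.sum_congr rfl fun j _ => ?_
  have : A.map (Int.cast : ℤ → ℝ) j i = A.map (Int.cast : ℤ → ℝ) i j := by
    have := hsym.apply i j
    simp [Matrix.map_apply, this]
  rw [this]; ring

lemma Bf_add_right (x y z : Fin r → ℝ) : Bf A x (y + z) = Bf A x y + Bf A x z := by
  unfold Bf; rw [Matrix.mulVec_add, dotProduct_add]

lemma Bf_smul_right (a : ℝ) (x y : Fin r → ℝ) : Bf A x (a • y) = a * Bf A x y := by
  unfold Bf; rw [Matrix.mulVec_smul, dotProduct_smul, smul_eq_mul]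

lemma Bf_add_left (x y z : Fin r → ℝ) : Bf A (x + y) z = Bf A x z + Bf A y z := by
  unfold Bf; rw [add_dotProduct]

lemma Bf_smul_left (a : ℝ) (x y : Fin r → ℝ) : Bf A (a • x) y = a * Bf A x y := by
  unfold Bf; rw [smul_dotProduct, smul_eq_mul]

lemma Qf_eq (x : Fin r → ℝ) : Qf A x = (1/2) * Bf A x x := rfl

lemma Qf_zero : Qf A 0 = 0 := by unfold Qf; simp

lemma Qf_combo (hsym : A.IsSymm) (a b : ℝ) (x y : Fin r → ℝ) :
    Qf A (a • x + b • y) = a^2 * Qf A x + a * b * Bf A x y + b^2 * Qf A y := by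
  simp only [Qf_eq, Bf_add_left, Bf_add_right, Bf_smul_left, Bf_smul_right, Bf_symm hsym y x]
  ring

/-- If every nontrivial combination of `v, w` is `Q`-negative, contradiction with `hmax`. -/
lemma no_neg_plane (hmax : ∀ W : Submodule ℝ (Fin r → ℝ),
      (∀ x ∈ W, x ≠ 0 → Qf A x < 0) → Module.finrank ℝ W ≤ 1)
    (v w : Fin r → ℝ)
    (h : ∀ a b : ℝ, ¬(a = 0 ∧ b = 0) → Qf A (a • v + b • w) < 0) : False := by
  have hli : LinearIndependent ℝ ![v, w] := by
    rw [LinearIndependent.pair_iff]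
    intro s t hst
    by_contra hc
    have := h s t (by tauto)
    rw [hst, Qf_zero] at this
    exact lt_irrefl 0 this
  have hrank : Module.finrank ℝ (Submodule.span ℝ {v, w}) = 2 := by
    have h2 := finrank_span_eq_card hli
    have : Set.range ![v, w] = {v, w} := by
      simp [Matrix.range_cons, Matrix.range_empty, Set.pair_comm]
    rw [this] at h2
    simpa using h2
  have hle := hmax (Submodule.span ℝ {v, w}) (by
    intro x hx hx0
    rcases Submodule.mem_span_pair.1 hx with ⟨a, b, rfl⟩
    refine h a b ?_
    rintro ⟨rfl, rfl⟩
    simp at hx0)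
  omega

lemma neg_on_plane (hsym : A.IsSymm) {v w : Fin r → ℝ} (hv : Qf A v < 0)
    (hd : (Bf A v w)^2 < 4 * Qf A v * Qf A w)
    (a b : ℝ) (hab : ¬(a = 0 ∧ b = 0)) : Qf A (a • v + b • w) < 0 := by
  rw [Qf_combo hsym]
  rcases eq_or_ne b 0 with rfl | hb
  · have ha : a ≠ 0 := by tauto
    have : a^2 > 0 := by positivity
    nlinarith
  · have : b^2 > 0 := by positivity
    nlinarith [sq_nonneg (2 * Qf A v * a + Bf A v w * b)]

lemma exists_Bf_pos (hsym : A.IsSymm) (hdet : A.det ≠ 0) {x : Fin r → ℝ} (hx : x ≠ 0) :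
    ∃ y : Fin r → ℝ, 0 < Bf A x y := by
  set M := A.map (Int.cast : ℤ → ℝ) with hM
  have hMsym : M.IsSymm := by
    unfold Matrix.IsSymm at hsym ⊢
    rw [hM, ← Matrix.transpose_map, hsym]
  have hMdet : M.det ≠ 0 := by
    have := RingHom.map_det (Int.castRingHom ℝ) A
    rw [hM]
    intro h
    simp only [RingHom.mapMatrix_apply, Int.coe_castRingHom] at this
    rw [← this] at h
    exact hdet (by exact_mod_cast h)
  have hMx : M.mulVec x ≠ 0 := by
    intro h
    have hinj : Function.Injective M.mulVec :=
      Matrix.mulVec_injective_iff_isUnit.2 ((Matrix.isUnit_iff_isUnit_det M).2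
        (isUnit_iff_ne_zero.2 hMdet))
    exact hx (hinj (by rw [h, Matrix.mulVec_zero]))
  refine ⟨M.mulVec x, ?_⟩
  have : Bf A x (M.mulVec x) = (M.mulVec x) ⬝ᵥ (M.mulVec x) := by
    unfold Bf
    rw [← hM, Matrix.dotProduct_mulVec, ← Matrix.mulVec_transpose, hMsym.eq]
  rw [this]
  have hnn : 0 ≤ (M.mulVec x) ⬝ᵥ (M.mulVec x) :=
    Finset.sum_nonneg fun i _ => mul_self_nonneg _
  rcases lt_or_eq_of_le hnn with h | h
  · exact h
  · exact absurd (dotProduct_self_eq_zero.1 h.symm) hMx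

lemma pos_on_orth (hsym : A.IsSymm) (hdet : A.det ≠ 0)
    (hmax : ∀ W : Submodule ℝ (Fin r → ℝ),
      (∀ x ∈ W, x ≠ 0 → Qf A x < 0) → Module.finrank ℝ W ≤ 1)
    {c₁ : Fin r → ℝ} (hc₁ : Qf A c₁ < 0)
    {x : Fin r → ℝ} (hx : x ≠ 0) (horth : Bf A c₁ x = 0) : 0 < Qf A x := by
  rcases lt_trichotomy (Qf A x) 0 with hq | hq | hq
  · -- negative: span{c₁,x} is a negative 2-plane
    exact absurd (no_neg_plane hmax c₁ x (fun a b hab => by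
      rw [Qf_combo hsym, horth]
      rcases eq_or_ne a 0 with rfl | ha
      · have hb : b ≠ 0 := by tauto
        have : 0 < b^2 := by positivity
        nlinarith
      · have : 0 < a^2 := by positivity
        nlinarith)) id
  · -- isotropic orthogonal vector: build a negative 2-plane using nondegeneracy
    exfalso
    obtain ⟨y, hy⟩ := exists_Bf_pos hsym hdet hx
    set Bxy := Bf A x y with hBxy
    set k := Bf A c₁ y with hk
    set qy := Qf A y with hqy
    set q₁ := Qf A c₁ with hq₁
    set C := k^2 - 4*q₁*qy with hC
    set m := max C 1 with hm
    have hmpos : (0:ℝ) < m := lt_of_lt_of_le one_pos (le_max_right _ _)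
    have hCm : C ≤ m := le_max_left _ _
    set β := 2*q₁*Bxy/m with hβ
    have hβm : β * m = 2*q₁*Bxy := by rw [hβ, div_mul_cancel₀ _ (ne_of_gt hmpos)]
    have hβne : β ≠ 0 := by
      rw [hβ]
      apply div_ne_zero _ (ne_of_gt hmpos)
      nlinarith
    have hβ2 : 0 < β^2 := by positivity
    have hdisc : (β*k)^2 < 4*q₁*(β*Bxy + β^2*qy) := by
      have h1 : β^2*C < 2*β^2*m := by nlinarith
      have h1' : β^2*(k^2-4*q₁*qy) < 2*β^2*m := by rw [← hC]; exact h1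
      have h2 : 2*β^2*m = 4*q₁*(β*Bxy) := by
        have h3 : 2*β^2*m = 2*β*(β*m) := by ring
        rw [h3, hβm]; ring
      nlinarith [h1', h2]
    set u := x + β • y with hu
    have hBcu : Bf A c₁ u = β * k := by
      rw [hu, Bf_add_right, Bf_smul_right, horth, hk]; ring
    have hQu : Qf A u = β*Bxy + β^2*qy := by
      have := Qf_combo hsym 1 β x y
      simp only [one_smul, one_pow, one_mul] at this
      rw [hu, this, hq, hBxy, hqy]; ring
    exact no_neg_plane hmax c₁ u (fun a b hab =>
      neg_on_plane hsym hc₁ (by rw [hBcu, hQu]; exact hdisc) a b hab)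
  · exact hq

lemma Bf_self (x : Fin r → ℝ) : Bf A x x = 2 * Qf A x := by rw [Qf_eq]; ring

lemma Qf_add (hsym : A.IsSymm) (x y : Fin r → ℝ) :
    Qf A (x + y) = Qf A x + Bf A x y + Qf A y := by
  have := Qf_combo hsym 1 1 x y
  simpa using this

lemma E_nonpos (q₁ q₂ b s t : ℝ) (h1 : q₁ < 0) (h2 : q₂ < 0)
    (hD : 4*q₁*q₂ - b^2 < 0) :
    ((4*q₁*q₂-b^2)*(s^2*q₁+s*t*b+t^2*q₂) + b*(2*q₁*s+b*t)*(b*s+2*q₂*t) ≤ 0) ∧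
    (¬(s = 0 ∧ t = 0) →
      (4*q₁*q₂-b^2)*(s^2*q₁+s*t*b+t^2*q₂) + b*(2*q₁*s+b*t)*(b*s+2*q₂*t) < 0) := by
  set E := (4*q₁*q₂-b^2)*(s^2*q₁+s*t*b+t^2*q₂) + b*(2*q₁*s+b*t)*(b*s+2*q₂*t) with hE
  have hq12 : 0 < q₁ * q₂ := mul_pos_of_neg_of_neg h1 h2
  have hpb : 0 < 4*q₁*q₂ + b^2 := by nlinarith [sq_nonneg b]
  have h4a : q₁*(4*q₁*q₂+b^2) < 0 := mul_neg_of_neg_of_pos h1 hpb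
  have hid : 4*(q₁*(4*q₁*q₂+b^2))*E =
      (2*(q₁*(4*q₁*q₂+b^2))*s + 8*b*q₁*q₂*t)^2 + 4*q₁*q₂*(4*q₁*q₂-b^2)^2*t^2 := by
    rw [hE]; ring
  have htail : 0 ≤ q₁*q₂*((4*q₁*q₂-b^2)^2*t^2) :=
    mul_nonneg hq12.le (mul_nonneg (sq_nonneg _) (sq_nonneg _))
  have hrhs : 0 ≤ (2*(q₁*(4*q₁*q₂+b^2))*s + 8*b*q₁*q₂*t)^2 + 4*q₁*q₂*(4*q₁*q₂-b^2)^2*t^2 := by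
    nlinarith [sq_nonneg (2*(q₁*(4*q₁*q₂+b^2))*s + 8*b*q₁*q₂*t), htail]
  constructor
  · nlinarith [hid, hrhs]
  · intro hst
    rcases eq_or_ne t 0 with rfl | ht
    · have hs : s ≠ 0 := by tauto
      have : 0 < s^2 := by positivity
      have : E = q₁*(4*q₁*q₂+b^2)*s^2 := by rw [hE]; ring
      nlinarith
    · have ht2 : 0 < t^2 := by positivity
      have hstrict : 0 < (2*(q₁*(4*q₁*q₂+b^2))*s + 8*b*q₁*q₂*t)^2
          + 4*q₁*q₂*(4*q₁*q₂-b^2)^2*t^2 := by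
        have hD2 : 0 < (4*q₁*q₂-b^2)^2 := lt_of_le_of_ne (sq_nonneg _) (Ne.symm (pow_ne_zero 2 (ne_of_lt hD)))
        have htailpos : 0 < q₁*q₂*((4*q₁*q₂-b^2)^2*t^2) :=
          mul_pos hq12 (mul_pos hD2 ht2)
        nlinarith [sq_nonneg (2*(q₁*(4*q₁*q₂+b^2))*s + 8*b*q₁*q₂*t), htailpos]
      nlinarith [hid, hstrict]


/-- If `Q` has type `(r-1,1)`, and `c₁, c₂` are linearly independent with
`Q(c₁) < 0`, `Q(c₂) < 0`, `B(c₁,c₂) < 0`, then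
`Q⁺(ν) = Q(ν) + [B(c₁,c₂)/(4Q(c₁)Q(c₂) - B(c₁,c₂)²)] B(c₁,ν) B(c₂,ν)`
is positive definite. -/
theorem Qplus_pos_def {r : ℕ} (A : Matrix (Fin r) (Fin r) ℤ)
    (hsym : A.IsSymm) (hdet : A.det ≠ 0)
    (hneg : ∃ c : Fin r → ℝ, Qf A c < 0)
    (hmax : ∀ W : Submodule ℝ (Fin r → ℝ),
      (∀ x ∈ W, x ≠ 0 → Qf A x < 0) → Module.finrank ℝ W ≤ 1)
    (c₁ c₂ : Fin r → ℝ) (hli : LinearIndependent ℝ ![c₁, c₂])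
    (hc₁ : Qf A c₁ < 0) (hc₂ : Qf A c₂ < 0) (hB : Bf A c₁ c₂ < 0) :
    ∀ ν : Fin r → ℝ, ν ≠ 0 →
      0 < Qf A ν + Bf A c₁ c₂ / (4 * Qf A c₁ * Qf A c₂ - (Bf A c₁ c₂) ^ 2) *
        Bf A c₁ ν * Bf A c₂ ν := by
  set q₁ := Qf A c₁ with hq₁
  set q₂ := Qf A c₂ with hq₂
  set b := Bf A c₁ c₂ with hb
  -- Step 1 : D < 0
  have hD : 4 * q₁ * q₂ - b ^ 2 < 0 := by
    rcases lt_trichotomy (4 * q₁ * q₂ - b ^ 2) 0 with h | h | h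
    · exact h
    · -- degenerate plane: b•c₁ - (2q₁)•c₂ is isotropic and orthogonal to c₁
      exfalso
      set w := b • c₁ + (-(2*q₁)) • c₂ with hw
      have hwne : w ≠ 0 := by
        intro h0
        have := (LinearIndependent.pair_iff.1 hli) b (-(2*q₁)) (by rw [← hw]; exact h0)
        have : q₁ = 0 := by
          have h2 := this.2
          linarith [neg_eq_zero.1 h2 ▸ (by linarith : (2:ℝ)*q₁ = 2*q₁)]
        linarith
      have horth : Bf A c₁ w = 0 := by
        rw [hw, Bf_add_right, Bf_smul_right, Bf_smul_right, Bf_self, ← hq₁, ← hb]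
        ring
      have hQw : Qf A w = 0 := by
        rw [hw, Qf_combo hsym, ← hq₁, ← hq₂, ← hb]
        nlinarith [h]
      have := pos_on_orth hsym hdet hmax hc₁ hwne horth
      rw [hQw] at this
      exact lt_irrefl 0 this
    · -- negative definite plane contradicts hmax
      exfalso
      exact no_neg_plane hmax c₁ c₂ (fun a b' hab =>
        neg_on_plane hsym hc₁ (by rw [← hq₁, ← hq₂, ← hb]; nlinarith) a b' hab)
  have hDne : 4 * q₁ * q₂ - b ^ 2 ≠ 0 := ne_of_lt hD
  intro ν hν
  set B₁ := Bf A c₁ ν with hB₁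
  set B₂ := Bf A c₂ ν with hB₂
  set D := 4 * q₁ * q₂ - b ^ 2 with hDdef
  set s := (2*q₂*B₁ - b*B₂)/D with hs
  set t := (2*q₁*B₂ - b*B₁)/D with ht
  set w := ν + (-s) • c₁ + (-t) • c₂ with hw
  have hνeq : ν = w + (s • c₁ + t • c₂) := by rw [hw]; module
  have hBc₁w : Bf A c₁ w = 0 := by
    rw [hw, Bf_add_right, Bf_add_right, Bf_smul_right, Bf_smul_right, Bf_self,
      ← hq₁, ← hb, ← hB₁, hs, ht]
    field_simp
    ring
  have hBc₂w : Bf A c₂ w = 0 := by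
    rw [hw, Bf_add_right, Bf_add_right, Bf_smul_right, Bf_smul_right, Bf_self,
      Bf_symm hsym c₂ c₁, ← hq₂, ← hb, ← hB₂, hs, ht]
    field_simp
    ring
  have hB1eq : B₁ = 2*q₁*s + b*t := by
    have : Bf A c₁ ν = Bf A c₁ w + (s * Bf A c₁ c₁ + t * Bf A c₁ c₂) := by
      conv_lhs => rw [hνeq]
      simp only [Bf_add_right, Bf_smul_right]
    rw [← hB₁, hBc₁w, Bf_self, ← hq₁, ← hb] at this
    rw [this]; ring
  have hB2eq : B₂ = b*s + 2*q₂*t := by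
    have : Bf A c₂ ν = Bf A c₂ w + (s * Bf A c₂ c₁ + t * Bf A c₂ c₂) := by
      conv_lhs => rw [hνeq]
      simp only [Bf_add_right, Bf_smul_right]
    rw [← hB₂, hBc₂w, Bf_self, Bf_symm hsym c₂ c₁, ← hq₂, ← hb] at this
    rw [this]; ring
  have hQν : Qf A ν = Qf A w + (s^2*q₁ + s*t*b + t^2*q₂) := by
    rw [hνeq, Qf_add hsym, Qf_combo hsym, ← hq₁, ← hq₂, ← hb]
    have hcross : Bf A w (s • c₁ + t • c₂) = 0 := by
      rw [Bf_add_right, Bf_smul_right, Bf_smul_right,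
        Bf_symm hsym w c₁, Bf_symm hsym w c₂, hBc₁w, hBc₂w]
      ring
    rw [hcross]; ring
  obtain ⟨hE0, hElt⟩ := E_nonpos q₁ q₂ b s t hc₁ hc₂ hD
  have hEfrac : (s^2*q₁ + s*t*b + t^2*q₂) + b / D * B₁ * B₂ =
      (D*(s^2*q₁+s*t*b+t^2*q₂) + b*(2*q₁*s+b*t)*(b*s+2*q₂*t)) / D := by
    rw [hB1eq, hB2eq]
    field_simp
  rw [hQν]
  have hgoal : Qf A w + ((s^2*q₁ + s*t*b + t^2*q₂) + b / D * B₁ * B₂) > 0 := by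
    rcases eq_or_ne w 0 with hw0 | hw0
    · have hst : ¬(s = 0 ∧ t = 0) := by
        rintro ⟨hs0, ht0⟩
        apply hν
        rw [hνeq, hw0, hs0, ht0]
        simp
      have hEneg := hElt hst
      have : 0 < (D*(s^2*q₁+s*t*b+t^2*q₂) + b*(2*q₁*s+b*t)*(b*s+2*q₂*t)) / D :=
        div_pos_of_neg_of_neg hEneg hD
      rw [hw0, Qf_zero, hEfrac]
      linarith
    · have hQw : 0 < Qf A w := pos_on_orth hsym hdet hmax hc₁ hw0 hBc₁w
      have : 0 ≤ (D*(s^2*q₁+s*t*b+t^2*q₂) + b*(2*q₁*s+b*t)*(b*s+2*q₂*t)) / D :=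
        div_nonneg_of_nonpos hE0 (le_of_lt hD)
      rw [hEfrac]
      linarith
  linarith [hgoal]
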